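/- For s > 1, the physical dispersion relation λ_ph(ξ) = √Λ_ph(ξ) (Λ_ph being the smaller eigenvalue of M(ξ)⁻¹ R^s(ξ)) satisfies λ_ph(ξ)/ξ → 1 as ξ → 0⁺; equivalently Λ_ph(ξ)/ξ² → 1 as ξ → 0. -/

import Mathlib

/-!
Since `det M(ξ) = 1/12`, a number `Λ` is an eigenvalue of `M(ξ)⁻¹ R^s(ξ)` exactly when
`det (R^s(ξ) - Λ M(ξ)) = Λ²/12 - B Λ + C = 0`. The least real root of this quadratic is
`6 (B - √(B² - C/3)) = 2 C / (B + √(B² - C/3))`, and the rationalised form has no `0/0` at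
`ξ = 0`: the denominator tends to `2 (s - 1) ≠ 0`, while `C(ξ) = ξ² sinc²(ξ/2) (s - cos²(ξ/2))`,
so `C(ξ)/ξ² → s - 1`. Hence `Λ_ph(ξ)/ξ² → 2 (s - 1) / (2 (s - 1)) = 1`.
-/

open Real Complex Matrix Filter Topology

/-- Fourier symbol of the SIPG mass matrix (mesh size h = 1). -/
noncomputable def Msym (ξ : ℝ) : Matrix (Fin 2) (Fin 2) ℂ :=
  !![(((2 + Real.cos ξ) / 3 : ℝ) : ℂ), Complex.I * (Real.sin ξ : ℂ) / 6;
     -Complex.I * (Real.sin ξ : ℂ) / 6, (((2 - Real.cos ξ) / 12 : ℝ) : ℂ)]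

/-- Fourier symbol of the SIPG stiffness matrix with penalty parameter s (mesh size h = 1). -/
noncomputable def Rsym (s ξ : ℝ) : Matrix (Fin 2) (Fin 2) ℂ :=
  !![((4 * Real.sin (ξ / 2) ^ 2 : ℝ) : ℂ), 0;
     0, ((s - Real.cos (ξ / 2) ^ 2 : ℝ) : ℂ)]

/-- The matrix S(ξ) = M(ξ)⁻¹ R^s(ξ). -/
noncomputable def Ssym (s ξ : ℝ) : Matrix (Fin 2) (Fin 2) ℂ := (Msym ξ)⁻¹ * Rsym s ξ

/-- Λ is an eigenvalue of the 2×2 complex matrix S. -/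
def IsEigOf (S : Matrix (Fin 2) (Fin 2) ℂ) (Λ : ℂ) : Prop :=
  ∃ v : Fin 2 → ℂ, v ≠ 0 ∧ S.mulVec v = Λ • v

/-- The coefficient B(ξ) of the characteristic quadratic Λ²/12 − B Λ + C = 0. -/
noncomputable def Bcoef (s ξ : ℝ) : ℝ :=
  4 * Real.sin (ξ / 2) ^ 2 * (2 - Real.cos ξ) / 12 +
    (s - Real.cos (ξ / 2) ^ 2) * (2 + Real.cos ξ) / 3

/-- The coefficient C(ξ) of the characteristic quadratic Λ²/12 − B Λ + C = 0. -/
noncomputable def Ccoef (s ξ : ℝ) : ℝ :=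
  4 * Real.sin (ξ / 2) ^ 2 * (s - Real.cos (ξ / 2) ^ 2)

lemma det_Msym (ξ : ℝ) : (Msym ξ).det = 1 / 12 := by
  rw [Msym, det_fin_two_of]
  push_cast
  linear_combination (-1 / 36 : ℂ) * Complex.sin_sq_add_cos_sq ξ + (Complex.sin ξ ^ 2 / 36) * I_sq

lemma det_Rsym_sub_smul_Msym (s ξ : ℝ) (Λ : ℂ) :
    (Rsym s ξ - Λ • Msym ξ).det = Λ ^ 2 / 12 - Λ * Bcoef s ξ + Ccoef s ξ := by
  simp only [Rsym, Msym, Bcoef, Ccoef, det_fin_two, Matrix.sub_apply, Matrix.smul_apply, of_apply,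
    cons_val', cons_val_zero, cons_val_one, cons_val_fin_one, smul_eq_mul]
  push_cast
  linear_combination (-Λ ^ 2 / 36) * Complex.sin_sq_add_cos_sq ξ +
    (Λ ^ 2 * Complex.sin ξ ^ 2 / 36) * I_sq

lemma isEigOf_inv_mul_iff {M R : Matrix (Fin 2) (Fin 2) ℂ} (hM : IsUnit M.det) (Λ : ℂ) :
    IsEigOf (M⁻¹ * R) Λ ↔ (R - Λ • M).det = 0 := by
  have hmul (v : Fin 2 → ℂ) : (M⁻¹ * R) *ᵥ v = Λ • v ↔ (R - Λ • M) *ᵥ v = 0 := by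
    rw [sub_mulVec, sub_eq_zero, smul_mulVec, ← mulVec_mulVec,
      ← (mulVec_injective_of_isUnit ((isUnit_iff_isUnit_det M).mpr hM)).eq_iff, mulVec_mulVec,
      mul_nonsing_inv _ hM, one_mulVec, mulVec_smul]
  simp only [IsEigOf, hmul, ← exists_mulVec_eq_zero_iff]

lemma isEigOf_Ssym_iff (s ξ μ : ℝ) :
    IsEigOf (Ssym s ξ) μ ↔ μ ^ 2 / 12 - μ * Bcoef s ξ + Ccoef s ξ = 0 := by
  rw [Ssym, isEigOf_inv_mul_iff (by simp [det_Msym]), det_Rsym_sub_smul_Msym]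
  exact_mod_cast Iff.rfl

lemma eq_of_isLeast_quadratic_roots {B C x : ℝ}
    (hden : B + √(B ^ 2 - C / 3) ≠ 0) (hx : IsLeast {y | y ^ 2 / 12 - y * B + C = 0} x) :
    x = 2 * C / (B + √(B ^ 2 - C / 3)) := by
  have hx_root : x ^ 2 / 12 - x * B + C = 0 := hx.1
  have hD : 0 ≤ B ^ 2 - C / 3 := by nlinarith [sq_nonneg (x - 6 * B)]
  set q := √(B ^ 2 - C / 3)
  have hq : q ^ 2 = B ^ 2 - C / 3 := sq_sqrt hD
  have hx_le : x ≤ 6 * (B - q) := hx.2 (show _ = _ by linear_combination 3 * hq)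
  have hroots : (x - 6 * (B - q)) * (x - 6 * (B + q)) = 0 := by
    linear_combination 12 * hx_root - 36 * hq
  have hx_eq : x = 6 * (B - q) := by
    rcases mul_eq_zero.mp hroots with h | h
    · linarith
    · nlinarith [sqrt_nonneg (B ^ 2 - C / 3)]
  rw [hx_eq, eq_div_iff hden]
  linear_combination -6 * hq

lemma Ccoef_eq_sq_mul_sinc (s ξ : ℝ) :
    Ccoef s ξ = ξ ^ 2 * (Real.sinc (ξ / 2) ^ 2 * (s - Real.cos (ξ / 2) ^ 2)) := by
  rcases eq_or_ne ξ 0 with rfl | hξ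
  · simp [Ccoef]
  · rw [Ccoef, Real.sinc_of_ne_zero (div_ne_zero hξ two_ne_zero)]
    field_simp
    ring

lemma tendsto_Bcoef_add_sqrt {s : ℝ} (hs : 1 ≤ s) :
    Tendsto (fun ξ => Bcoef s ξ + √(Bcoef s ξ ^ 2 - Ccoef s ξ / 3)) (𝓝 0) (𝓝 (2 * (s - 1))) := by
  have hc : Continuous (fun ξ => Bcoef s ξ + √(Bcoef s ξ ^ 2 - Ccoef s ξ / 3)) := by
    unfold Bcoef Ccoef; fun_prop
  have hB0 : Bcoef s 0 = s - 1 := by norm_num [Bcoef]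
  have hC0 : Ccoef s 0 = 0 := by simp [Ccoef]
  convert hc.tendsto 0 using 2
  rw [hB0, hC0, zero_div, sub_zero, sqrt_sq (sub_nonneg.mpr hs)]
  ring

lemma tendsto_Ccoef_div_sq (s : ℝ) :
    Tendsto (fun ξ => Ccoef s ξ / ξ ^ 2) (𝓝[≠] 0) (𝓝 (s - 1)) := by
  have hc : Continuous (fun ξ => Real.sinc (ξ / 2) ^ 2 * (s - Real.cos (ξ / 2) ^ 2)) := by
    have := Real.continuous_sinc; fun_prop
  have hc0 : Real.sinc (0 / 2) ^ 2 * (s - Real.cos (0 / 2) ^ 2) = s - 1 := by simp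
  refine (tendsto_nhdsWithin_of_tendsto_nhds (hc0 ▸ hc.tendsto 0)).congr' ?_
  filter_upwards [self_mem_nhdsWithin] with ξ (hξ : ξ ≠ 0)
  rw [Ccoef_eq_sq_mul_sinc, mul_div_cancel_left₀ _ (pow_ne_zero 2 hξ)]

theorem Ssym_physical_eigenvalue_low_freq (s : ℝ) (hs : 1 < s)
    (Λph : ℝ → ℝ)
    (hph : ∀ ξ : ℝ, IsEigOf (Ssym s ξ) ((Λph ξ : ℝ) : ℂ) ∧
      ∀ μ : ℝ, IsEigOf (Ssym s ξ) (μ : ℂ) → Λph ξ ≤ μ) :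
    Filter.Tendsto (fun ξ : ℝ => Λph ξ / ξ ^ 2) (nhdsWithin 0 {0}ᶜ) (nhds 1) := by
  have hlim_ne : 2 * (s - 1) ≠ 0 := by linarith
  have hden := tendsto_Bcoef_add_sqrt hs.le
  have hlim :=
    ((tendsto_Ccoef_div_sq s).const_mul 2).div (hden.mono_left nhdsWithin_le_nhds) hlim_ne
  rw [div_self hlim_ne] at hlim
  refine hlim.congr' ?_
  filter_upwards [nhdsWithin_le_nhds (hden.eventually (eventually_ne_nhds hlim_ne))] with ξ hden_ne
  have hleast : IsLeast {y | y ^ 2 / 12 - y * Bcoef s ξ + Ccoef s ξ = 0} (Λph ξ) :=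
    ⟨(isEigOf_Ssym_iff s ξ _).1 (hph ξ).1, fun μ hμ => (hph ξ).2 μ ((isEigOf_Ssym_iff s ξ μ).2 hμ)⟩
  rw [Pi.div_apply, eq_of_isLeast_quadratic_roots hden_ne hleast]
  ring
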